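/- One has E_0 E*_d E_d E*_0 = (φ_1 φ_2 ⋯ φ_d / (τ_d(θ_d) τ*_d(θ*_d))) · E_0 E*_0, where τ_d(θ_d) = (θ_d−θ_0)⋯(θ_d−θ_{d−1}) and τ*_d(θ*_d) = (θ*_d−θ*_0)⋯(θ*_d−θ*_{d−1}) are nonzero since θ_0,…,θ_d are mutually distinct and θ*_0,…,θ*_d are mutually distinct. -/

import Mathlib

open Polynomial Matrix Finset

noncomputable section

/-- The lower bidiagonal matrix with diagonal entries `θ 0, …, θ d` and
subdiagonal entries `1`. -/
def matA {K : Type*} [Field K] (d : ℕ) (θ : ℕ → K) :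
    Matrix (Fin (d + 1)) (Fin (d + 1)) K :=
  Matrix.of fun i j =>
    if (i : ℕ) = (j : ℕ) then θ (i : ℕ)
    else if (i : ℕ) = (j : ℕ) + 1 then 1 else 0

/-- The upper bidiagonal matrix with diagonal entries `θs 0, …, θs d` and
superdiagonal entries `φ 1, …, φ d` (the `(i-1,i)`-entry is `φ i`). -/
def matAs {K : Type*} [Field K] (d : ℕ) (θs φ : ℕ → K) :
    Matrix (Fin (d + 1)) (Fin (d + 1)) K :=
  Matrix.of fun i j =>
    if (i : ℕ) = (j : ℕ) then θs (i : ℕ)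
    else if (j : ℕ) = (i : ℕ) + 1 then φ (j : ℕ) else 0

/-- The primitive idempotent `E_i = ∏_{j ≠ i} (M - θ_j I)/(θ_i - θ_j)` of a matrix `M`
with eigenvalues `θ 0, …, θ d`. -/
def primIdem {K : Type*} [Field K] (d : ℕ) (θ : ℕ → K)
    (M : Matrix (Fin (d + 1)) (Fin (d + 1)) K) (i : ℕ) :
    Matrix (Fin (d + 1)) (Fin (d + 1)) K :=
  Polynomial.aeval M (∏ j ∈ (Finset.range (d + 1)).erase i,
    (Polynomial.C ((θ i - θ j)⁻¹) * (Polynomial.X - Polynomial.C (θ j))))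

/-- `τ_i(λ) = (λ - θ_0)(λ - θ_1)⋯(λ - θ_{i-1})`. -/
def tauPoly {K : Type*} [Field K] (θ : ℕ → K) (i : ℕ) : Polynomial K :=
  ∏ k ∈ Finset.range i, (Polynomial.X - Polynomial.C (θ k))

/-- `η_i(λ) = (λ - θ_d)(λ - θ_{d-1})⋯(λ - θ_{d-i+1})`. -/
def etaPoly {K : Type*} [Field K] (d : ℕ) (θ : ℕ → K) (i : ℕ) : Polynomial K :=
  ∏ k ∈ Finset.range i, (Polynomial.X - Polynomial.C (θ (d - k)))

/-!
Up to the scalar factors in the primitive idempotents, `E_0 ∝ (A - θ_1)⋯(A - θ_d)`,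
`E_d ∝ τ_d(A)`, `E*_0 ∝ (A* - θ*_1)⋯(A* - θ*_d)` and `E*_d ∝ τ*_d(A*)`. On the standard basis
`A e_s = θ_s e_s + e_{s+1}` and `A*ᵀ e_s = θ*_s e_s + φ_{s+1} e_{s+1}` (with `e_{d+1} = 0`), so
`(A - θ_1)⋯(A - θ_d)` kills `e_1, …, e_d`: only its column `0` is nonzero, and dually only row `0`
of `(A* - θ*_1)⋯(A* - θ*_d)` is nonzero. Hence `E_0 X E*_0 = X₀₀ E_0 E*_0` for every `X`, and for
`X = τ*_d(A*) τ_d(A)` one has `X₀₀ = (e_0ᵀ τ*_d(A*)) (τ_d(A) e_0) = (φ_1⋯φ_d e_dᵀ) e_d`.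
-/

section Bidiagonal

variable {R : Type*} [CommRing R]

lemma aeval_transpose {n : Type*} [Fintype n] [DecidableEq n] (M : Matrix n n R) (p : R[X]) :
    aeval Mᵀ p = (aeval M p)ᵀ := by
  simp [aeval_eq_sum_range, transpose_sum, transpose_pow]

lemma mul_mul_eq_smul_mul_of_col_row {l m o : Type*} [Fintype m] (U : Matrix l m R)
    (V : Matrix m m R) (W : Matrix m o R) (j : m) (hU : ∀ k ≠ j, Uᵀ k = 0)
    (hW : ∀ k ≠ j, W k = 0) : U * V * W = V j j • (U * W) := by
  ext r s
  have hU' : ∀ k ≠ j, U r k = 0 := fun k hk => congrFun (hU k hk) r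
  have hW' : ∀ k ≠ j, W k s = 0 := fun k hk => congrFun (hW k hk) s
  simp only [mul_apply, Matrix.smul_apply, smul_eq_mul]
  rw [Fintype.sum_eq_single j fun k hk => by rw [hW' k hk, mul_zero],
    Fintype.sum_eq_single j fun k hk => by rw [hU' k hk, zero_mul],
    Fintype.sum_eq_single j fun k hk => by rw [hW' k hk, mul_zero]]
  ring

variable {n : Type*} [Fintype n] [DecidableEq n] (M : Matrix n n R) (θ c : ℕ → R)
  (v : ℕ → n → R)

lemma aeval_prod_Ico_mulVec (hv : ∀ s, M *ᵥ v s = θ s • v s + c s • v (s + 1)) {a b : ℕ}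
    (hab : a ≤ b) :
    aeval M (∏ k ∈ Ico a b, (X - C (θ k))) *ᵥ v a = (∏ k ∈ Ico a b, c k) • v b := by
  induction b, hab using Nat.le_induction with
  | base => simp
  | succ b hab ih =>
    have hstep : aeval M (X - C (θ b)) *ᵥ v b = c b • v (b + 1) := by
      rw [map_sub, aeval_X, aeval_C, Algebra.algebraMap_eq_smul_one, sub_mulVec, smul_mulVec,
        one_mulVec, hv, add_sub_cancel_left]
    rw [prod_Ico_succ_top hab, prod_Ico_succ_top hab, mul_comm, map_mul, ← mulVec_mulVec, ih,
      mulVec_smul, hstep, smul_smul]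

lemma aeval_prod_Ico_mulVec_eq_zero (hv : ∀ s, M *ᵥ v s = θ s • v s + c s • v (s + 1))
    {a s b : ℕ} (has : a ≤ s) (hsb : s ≤ b) (hb : v b = 0) :
    aeval M (∏ k ∈ Ico a b, (X - C (θ k))) *ᵥ v s = 0 := by
  rw [← prod_Ico_consecutive _ has hsb, map_mul, ← mulVec_mulVec,
    aeval_prod_Ico_mulVec M θ c v hv hsb, hb, smul_zero, mulVec_zero]

end Bidiagonal

section Leonard

/-- The standard basis vector `e_s`, indexed by `s : ℕ` so that `e_s = 0` for `s ≥ n`; this lets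
the bidiagonal matrices act as a shift `e_s ↦ e_{s+1}` without a boundary case. -/
def unitVec {R : Type*} [Zero R] [One R] (n s : ℕ) : Fin n → R :=
  fun i => if (i : ℕ) = s then 1 else 0

section UnitVec

variable {R : Type*} [CommRing R] {n : ℕ}

lemma unitVec_of_le {s : ℕ} (h : n ≤ s) : unitVec n s = (0 : Fin n → R) := by
  funext i
  simp only [unitVec, Pi.zero_apply, ite_eq_right_iff]
  omega

lemma unitVec_val (i : Fin n) : unitVec n i = Pi.single i (1 : R) := by
  funext j
  simp [unitVec, Pi.single_apply, Fin.ext_iff]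

lemma transpose_apply_eq_mulVec_unitVec (M : Matrix (Fin n) (Fin n) R) (j : Fin n) :
    Mᵀ j = M *ᵥ unitVec n j := by
  rw [unitVec_val, mulVec_single_one]
  rfl

lemma unitVec_dotProduct_self {s : ℕ} (h : s < n) : unitVec n s ⬝ᵥ unitVec n s = (1 : R) := by
  rw [show s = ((⟨s, h⟩ : Fin n) : ℕ) from rfl, unitVec_val, single_dotProduct]
  simp

end UnitVec

variable {K : Type*} [Field K] {d : ℕ}

lemma matA_mulVec_unitVec (θ : ℕ → K) (s : ℕ) :
    matA d θ *ᵥ unitVec (d + 1) s =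
      θ s • unitVec (d + 1) s + (1 : K) • unitVec (d + 1) (s + 1) := by
  rcases lt_or_ge s (d + 1) with hs | hs
  · obtain ⟨j, rfl⟩ : ∃ j : Fin (d + 1), (j : ℕ) = s := ⟨⟨s, hs⟩, rfl⟩
    rw [← transpose_apply_eq_mulVec_unitVec]
    funext i
    simp only [transpose_apply, matA, of_apply, Pi.add_apply, Pi.smul_apply, unitVec, smul_eq_mul]
    split_ifs <;> simp only [mul_one, mul_zero, add_zero, zero_add] <;> first | omega | congr 1
  · rw [unitVec_of_le hs, unitVec_of_le (by omega), mulVec_zero, smul_zero, smul_zero, add_zero]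

lemma matAs_transpose_mulVec_unitVec (θs φ : ℕ → K) (s : ℕ) :
    (matAs d θs φ)ᵀ *ᵥ unitVec (d + 1) s =
      θs s • unitVec (d + 1) s + φ (s + 1) • unitVec (d + 1) (s + 1) := by
  rcases lt_or_ge s (d + 1) with hs | hs
  · obtain ⟨j, rfl⟩ : ∃ j : Fin (d + 1), (j : ℕ) = s := ⟨⟨s, hs⟩, rfl⟩
    rw [← transpose_apply_eq_mulVec_unitVec]
    funext i
    simp only [transpose_apply, matAs, of_apply, Pi.add_apply, Pi.smul_apply, unitVec,
      smul_eq_mul]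
    split_ifs <;> simp only [mul_one, mul_zero, add_zero, zero_add] <;> first | omega | congr 1
  · rw [unitVec_of_le hs, unitVec_of_le (by omega), mulVec_zero, smul_zero, smul_zero, add_zero]

lemma primIdem_eq_smul_aeval (θ : ℕ → K) (M : Matrix (Fin (d + 1)) (Fin (d + 1)) K) (i : ℕ) :
    primIdem d θ M i = (∏ j ∈ (range (d + 1)).erase i, (θ i - θ j))⁻¹ •
      aeval M (∏ j ∈ (range (d + 1)).erase i, (X - C (θ j))) := by
  rw [primIdem, prod_mul_distrib, ← map_prod, map_mul, aeval_C, Algebra.algebraMap_eq_smul_one,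
    smul_mul_assoc, one_mul, prod_inv_distrib]

lemma primIdem_zero (θ : ℕ → K) (M : Matrix (Fin (d + 1)) (Fin (d + 1)) K) :
    primIdem d θ M 0 = (∏ j ∈ Ico 1 (d + 1), (θ 0 - θ j))⁻¹ •
      aeval M (∏ j ∈ Ico 1 (d + 1), (X - C (θ j))) := by
  rw [primIdem_eq_smul_aeval, range_eq_Ico, Ico_erase_left, ← Ico_add_one_left_eq_Ioo, zero_add]

lemma primIdem_last (θ : ℕ → K) (M : Matrix (Fin (d + 1)) (Fin (d + 1)) K) :
    primIdem d θ M d = ((tauPoly θ d).eval (θ d))⁻¹ • aeval M (tauPoly θ d) := by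
  rw [primIdem_eq_smul_aeval, range_add_one, erase_insert notMem_range_self, tauPoly, eval_prod]
  simp

lemma aeval_tauPoly_mulVec_unitVec_zero (θ : ℕ → K) :
    aeval (matA d θ) (tauPoly θ d) *ᵥ unitVec (d + 1) 0 = unitVec (d + 1) d := by
  have := aeval_prod_Ico_mulVec _ θ (fun _ => 1) _ (matA_mulVec_unitVec (d := d) θ) (Nat.zero_le d)
  rwa [prod_const_one, one_smul, ← range_eq_Ico] at this

lemma aeval_tauPoly_matAs_zero (θs φ : ℕ → K) :
    aeval (matAs d θs φ) (tauPoly θs d) 0 = (∏ k ∈ Icc 1 d, φ k) • unitVec (d + 1) d := by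
  have := aeval_prod_Ico_mulVec _ θs (fun s => φ (s + 1)) _
    (matAs_transpose_mulVec_unitVec (d := d) θs φ) (Nat.zero_le d)
  rw [prod_Ico_add', zero_add, Ico_add_one_right_eq_Icc] at this
  rw [tauPoly, range_eq_Ico, ← transpose_transpose (aeval _ _), ← aeval_transpose,
    transpose_apply_eq_mulVec_unitVec, Fin.val_zero, this]

lemma transpose_aeval_matA_eq_zero (θ : ℕ → K) {j : Fin (d + 1)} (hj : j ≠ 0) :
    (aeval (matA d θ) (∏ k ∈ Ico 1 (d + 1), (X - C (θ k))))ᵀ j = 0 := by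
  rw [transpose_apply_eq_mulVec_unitVec]
  exact aeval_prod_Ico_mulVec_eq_zero _ θ (fun _ => 1) _ (matA_mulVec_unitVec (d := d) θ)
    (Nat.one_le_iff_ne_zero.mpr (Fin.val_ne_zero_iff.mpr hj)) j.is_lt.le (unitVec_of_le le_rfl)

lemma aeval_matAs_eq_zero (θs φ : ℕ → K) {i : Fin (d + 1)} (hi : i ≠ 0) :
    aeval (matAs d θs φ) (∏ k ∈ Ico 1 (d + 1), (X - C (θs k))) i = 0 := by
  rw [← transpose_transpose (aeval _ _), ← aeval_transpose, transpose_apply_eq_mulVec_unitVec]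
  exact aeval_prod_Ico_mulVec_eq_zero _ θs _ _ (matAs_transpose_mulVec_unitVec (d := d) θs φ)
    (Nat.one_le_iff_ne_zero.mpr (Fin.val_ne_zero_iff.mpr hi)) i.is_lt.le (unitVec_of_le le_rfl)

lemma aeval_tauPoly_mul_aeval_tauPoly_zero_zero (θ θs φ : ℕ → K) :
    (aeval (matAs d θs φ) (tauPoly θs d) * aeval (matA d θ) (tauPoly θ d)) 0 0 =
      ∏ k ∈ Icc 1 d, φ k := by
  rw [mul_apply', aeval_tauPoly_matAs_zero]
  change _ ⬝ᵥ (aeval (matA d θ) (tauPoly θ d))ᵀ 0 = _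
  rw [transpose_apply_eq_mulVec_unitVec, Fin.val_zero, aeval_tauPoly_mulVec_unitVec_zero,
    smul_dotProduct, unitVec_dotProduct_self d.lt_succ_self, smul_eq_mul, mul_one]

end Leonard

theorem EZero_EsD_ED_EsZero_general {K : Type*} [Field K] (d : ℕ) (θ θs φ : ℕ → K) :
    primIdem d θ (matA d θ) 0 * primIdem d θs (matAs d θs φ) d * primIdem d θ (matA d θ) d * primIdem d θs (matAs d θs φ) 0 = ((∏ k ∈ Finset.Icc (1) (d), φ k) / ((tauPoly θ d).eval (θ d) * (tauPoly θs d).eval (θs d))) • (primIdem d θ (matA d θ) 0 * primIdem d θs (matAs d θs φ) 0) := by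
  simp only [primIdem_zero, primIdem_last, smul_mul_assoc, mul_smul_comm, smul_smul]
  rw [mul_assoc (aeval (matA d θ) _), mul_mul_eq_smul_mul_of_col_row _ _ _ 0
    (fun _ => transpose_aeval_matA_eq_zero θ) (fun _ => aeval_matAs_eq_zero θs φ),
    aeval_tauPoly_mul_aeval_tauPoly_zero_zero, smul_smul]
  congr 1
  ring

theorem EZero_EsD_ED_EsZero {K : Type*} [Field K] (d : ℕ) (θ θs φ : ℕ → K)
    (hθ : ∀ i ≤ d, ∀ j ≤ d, θ i = θ j → i = j)
    (hθs : ∀ i ≤ d, ∀ j ≤ d, θs i = θs j → i = j)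
    (hφ : ∀ i, 1 ≤ i → i ≤ d → φ i ≠ 0)
    (hE0 : ∀ i ≤ d, ∀ j ≤ d, 1 < |(i : ℤ) - (j : ℤ)| →
      primIdem d θ (matA d θ) i * matAs d θs φ * primIdem d θ (matA d θ) j = 0)
    (hE1 : ∀ i ≤ d, ∀ j ≤ d, |(i : ℤ) - (j : ℤ)| = 1 →
      primIdem d θ (matA d θ) i * matAs d θs φ * primIdem d θ (matA d θ) j ≠ 0)
    (hEs0 : ∀ i ≤ d, ∀ j ≤ d, 1 < |(i : ℤ) - (j : ℤ)| →
      primIdem d θs (matAs d θs φ) i * matA d θ * primIdem d θs (matAs d θs φ) j = 0)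
    (hEs1 : ∀ i ≤ d, ∀ j ≤ d, |(i : ℤ) - (j : ℤ)| = 1 →
      primIdem d θs (matAs d θs φ) i * matA d θ * primIdem d θs (matAs d θs φ) j ≠ 0) :
    primIdem d θ (matA d θ) 0 * primIdem d θs (matAs d θs φ) d * primIdem d θ (matA d θ) d * primIdem d θs (matAs d θs φ) 0 = ((∏ k ∈ Finset.Icc (1) (d), φ k) / ((tauPoly θ d).eval (θ d) * (tauPoly θs d).eval (θs d))) • (primIdem d θ (matA d θ) 0 * primIdem d θs (matAs d θs φ) 0) :=
  EZero_EsD_ED_EsZero_general d θ θs φ
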